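/- arXiv:2502.17954 — 3 statements merged into one kernel-verified Lean document; each statement's English description precedes it below -/
import Mathlib

section
/- Let n be a positive integer and p ≥ 3 a prime number. If p ∣ n and n is odd, then τ(U_n · U_{n+p} · U_{n+2p}) = (n(n+p)(n+2p)/p²) · U_p². -/
/-- The first Lucas sequence with parameters `(a, b)`:
`U 0 = 0`, `U 1 = 1`, `U (k+2) = a * U (k+1) + b * U k`. -/
def U (a b : ℤ) : ℕ → ℤ
  | 0 => 0
  | 1 => 1
  | (k + 2) => a * U a b (k + 1) + b * U a b k

/-- The second Lucas sequence with parameters `(a, b)`: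
`V 0 = 2`, `V 1 = a`, `V (k+2) = a * V (k+1) + b * V k`. -/
def V (a b : ℤ) : ℕ → ℤ
  | 0 => 2
  | 1 => a
  | (k + 2) => a * V a b (k + 1) + b * V a b k

/-- The order of appearance of `m` in the first Lucas sequence with parameters `(a, b)`:
the smallest positive integer `k` such that `m ∣ U a b k`. -/
noncomputable def tau (a b : ℤ) (m : ℤ) : ℕ :=
  sInf {k : ℕ | 0 < k ∧ m ∣ U a b k}

/-- The pair `(a, b)` is nondegenerate: `b ≠ 0` and
`(a, b) ∉ {(±2, -1), (±1, -1), (0, ±1), (±1, 0)}`. -/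
def Nondegenerate (a b : ℤ) : Prop :=
  b ≠ 0 ∧ (a, b) ∉ ({(2, -1), (-2, -1), (1, -1), (-1, -1),
    (0, 1), (0, -1), (1, 0), (-1, 0)} : Set (ℤ × ℤ))

namespace LucasAux

variable (a b : ℤ)

lemma U_zero : U a b 0 = 0 := rfl
lemma U_one : U a b 1 = 1 := rfl
lemma U_add_two (k : ℕ) : U a b (k+2) = a * U a b (k+1) + b * U a b k := rfl
lemma U_two : U a b 2 = a := by rw [U_add_two, U_one, U_zero]; ring

lemma U_add (m y : ℕ) :
    U a b (m + (y+1)) = U a b (m+1) * U a b (y+1) + b * U a b m * U a b y := by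
  induction m using Nat.twoStepInduction generalizing y with
  | zero => simp [U_zero, U_one]
  | one =>
    show U a b (1 + (y+1)) = _
    have e : 1 + (y+1) = y + 2 := by omega
    rw [e, U_add_two, U_two, U_one]; ring
  | more m ih1 ih2 =>
    have e : m + 2 + (y+1) = (m + (y+1)) + 2 := by omega
    have e1 : (m + (y+1)) + 1 = (m+1) + (y+1) := by omega
    rw [e, U_add_two, e1, ih2 y, ih1 y, show m+1+1 = m+2 from rfl,
      show m+2+1 = (m+1)+2 from rfl, U_add_two a b (m+1), U_add_two a b m]
    ring


section Hyp
variable (ha : 0 < a) (hD : 0 < a^2 + 4*b) (hb : b ≠ 0) (hab : IsCoprime a b)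

include ha hD in
lemma U_pos_aux : ∀ k, 0 ≤ U a b k ∧ 0 < U a b (k+1) ∧ a * U a b k ≤ 2 * U a b (k+1) := by
  intro k
  induction k with
  | zero => refine ⟨le_refl 0, one_pos, by simp [U_zero, U_one]⟩
  | succ k ih =>
    obtain ⟨h0, h1, h2⟩ := ih
    have hrec : U a b (k+2) = a * U a b (k+1) + b * U a b k := U_add_two a b k
    rcases le_or_gt 0 b with hb' | hb'
    · have hpos : 0 < U a b (k+2) := by nlinarith
      exact ⟨h1.le, hpos, by nlinarith⟩
    · have key : (a^2+1) * U a b (k+1) ≤ 2*a*U a b (k+2) := by nlinarith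
      have hpos : 0 < U a b (k+2) := by nlinarith
      refine ⟨h1.le, hpos, by nlinarith⟩

include ha hD in
lemma U_pos {k : ℕ} (hk : 1 ≤ k) : 0 < U a b k := by
  obtain ⟨j, rfl⟩ := Nat.exists_eq_add_of_le hk
  rw [Nat.add_comm]
  exact (U_pos_aux a b ha hD j).2.1

include ha hD in
lemma U_nonneg (k : ℕ) : 0 ≤ U a b k := (U_pos_aux a b ha hD k).1

include ha hD in
lemma U_ne_zero {k : ℕ} (hk : 1 ≤ k) : U a b k ≠ 0 := (U_pos a b ha hD hk).ne'

include ha hD hb in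
lemma U_succ_lt {k : ℕ} (hk : 2 ≤ k) : U a b k < U a b (k+1) := by
  obtain ⟨j, rfl⟩ : ∃ j, k = j + 1 := ⟨k - 1, by omega⟩
  have h1 : 0 < U a b (j+1) := U_pos a b ha hD (by omega)
  have hrec : U a b (j+2) = a * U a b (j+1) + b * U a b j := U_add_two a b j
  rcases hb.lt_or_gt with hb' | hb'
  · have ha3 : 3 ≤ a := by nlinarith
    have h2 := (U_pos_aux a b ha hD (j+1)).2.2
    have h0 : 0 < U a b j := U_pos a b ha hD (by omega)
    nlinarith
  · have h0 : 0 < U a b j := U_pos a b ha hD (by omega)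
    nlinarith

include ha hD hb in
lemma U_mono {i j : ℕ} (hi : 1 ≤ i) (hij : i ≤ j) : U a b i ≤ U a b j := by
  induction j with
  | zero => omega
  | succ j ih =>
    rcases Nat.lt_or_ge i (j+1) with h | h
    · have hj : i ≤ j := by omega
      refine le_trans (ih hj) ?_
      rcases Nat.lt_or_ge j 2 with hj2 | hj2
      · interval_cases j
        · omega
        · rw [U_two, U_one]; omega
      · exact (U_succ_lt a b ha hD hb hj2).le
    · have : i = j + 1 := by omega
      rw [this]

include ha hD hb in
lemma U_lt_of_lt {i j : ℕ} (hi : 1 ≤ i) (hij : i < j) (hj : 3 ≤ j) : U a b i < U a b j := by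
  obtain ⟨j', rfl⟩ : ∃ j', j = j' + 1 := ⟨j - 1, by omega⟩
  exact lt_of_le_of_lt (U_mono a b ha hD hb hi (by omega)) (U_succ_lt a b ha hD hb (by omega))

include hab in
lemma isCoprime_U_b (k : ℕ) : IsCoprime (U a b (k+1)) b := by
  induction k with
  | zero => exact isCoprime_one_left
  | succ k ih =>
    rw [U_add_two]
    have : a * U a b (k+1) + b * U a b k = a * U a b (k+1) + b * U a b k := rfl
    exact (hab.mul_left ih).add_mul_left_left (U a b k)

include hab in
lemma isCoprime_U_succ (k : ℕ) : IsCoprime (U a b k) (U a b (k+1)) := by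
  induction k with
  | zero => exact isCoprime_one_right
  | succ k ih =>
    rw [U_add_two]
    have h : IsCoprime (U a b (k+1)) (b * U a b k) :=
      (isCoprime_U_b a b hab k).mul_right ih.symm
    have := h.add_mul_left_right a
    rwa [show b * U a b k + U a b (k+1) * a = a * U a b (k+1) + b * U a b k by ring] at this

lemma U_dvd_U {d m : ℕ} (h : d ∣ m) : U a b d ∣ U a b m := by
  obtain ⟨t, rfl⟩ := h
  induction t with
  | zero => simp [U_zero]
  | succ t ih =>
    rcases Nat.eq_zero_or_pos d with rfl | hd
    · simp [U_zero]
    · obtain ⟨y, rfl⟩ : ∃ y, d = y + 1 := ⟨d - 1, by omega⟩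
      have : (y+1) * (t+1) = (y+1)*t + (y+1) := by ring
      rw [this, U_add a b ((y+1)*t) y]
      exact dvd_add (dvd_mul_left _ _) ((ih.mul_left b).mul_right _)

include hab in
lemma dvd_U_gcd (x : ℤ) : ∀ s m n, m + n ≤ s → x ∣ U a b m → x ∣ U a b n →
    x ∣ U a b (Nat.gcd m n) := by
  intro s
  induction s with
  | zero =>
    intro m n hs hm hn
    obtain ⟨rfl, rfl⟩ : m = 0 ∧ n = 0 := by omega
    simpa using hm
  | succ s ih =>
    intro m n hs hm hn
    rcases Nat.eq_zero_or_pos m with rfl | hm1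
    · rwa [Nat.gcd_zero_left]
    rcases Nat.eq_zero_or_pos n with rfl | hn1
    · rwa [Nat.gcd_zero_right]
    rcases Nat.lt_trichotomy m n with hlt | heq | hgt
    · -- n = m + r
      obtain ⟨r, rfl⟩ : ∃ r, n = m + (r + 1) := ⟨n - m - 1, by omega⟩
      have hxU : IsCoprime x (U a b (m+1)) :=
        ((isCoprime_U_succ a b hab m).of_isCoprime_of_dvd_left hm)
      have hr : x ∣ U a b (r+1) := by
        have h2 : x ∣ U a b (m+1) * U a b (r+1) := by
          have : U a b (m+1) * U a b (r+1) =
              U a b (m + (r+1)) - b * U a b m * U a b r := by rw [U_add a b m r]; ring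
          rw [this]
          exact dvd_sub hn ((hm.mul_left b).mul_right _)
        exact hxU.dvd_of_dvd_mul_left h2
      have hg : Nat.gcd m (m + (r+1)) = Nat.gcd m (r+1) := by
        rw [Nat.add_comm m (r+1), Nat.gcd_add_self_right]
      rw [hg]
      exact ih m (r+1) (by omega) hm hr
    · rw [heq, Nat.gcd_self]; exact hn
    · obtain ⟨r, rfl⟩ : ∃ r, m = n + (r + 1) := ⟨m - n - 1, by omega⟩
      have hxU : IsCoprime x (U a b (n+1)) :=
        ((isCoprime_U_succ a b hab n).of_isCoprime_of_dvd_left hn)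
      have hr : x ∣ U a b (r+1) := by
        have h2 : x ∣ U a b (n+1) * U a b (r+1) := by
          have : U a b (n+1) * U a b (r+1) =
              U a b (n + (r+1)) - b * U a b n * U a b r := by rw [U_add a b n r]; ring
          rw [this]
          exact dvd_sub hm ((hn.mul_left b).mul_right _)
        exact hxU.dvd_of_dvd_mul_left h2
      have hg : Nat.gcd (n + (r+1)) n = Nat.gcd (r+1) n := by
        rw [Nat.gcd_comm, Nat.add_comm n (r+1), Nat.gcd_add_self_right, Nat.gcd_comm]
      rw [hg]
      have := ih n (r+1) (by omega) hn hr
      rwa [Nat.gcd_comm] at this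


lemma master1 (k : ℕ) (hk : 1 ≤ k) (t : ℕ) :
    ∃ c c' : ℤ, U a b (k*(t+1)) = ((t:ℤ)+1) * U a b (k+1)^t * U a b k + c * U a b k^2 ∧
      U a b (k*(t+1)+1) = U a b (k+1)^(t+1) + c' * U a b k^2 := by
  obtain ⟨y, rfl⟩ : ∃ y, k = y + 1 := ⟨k - 1, by omega⟩
  have hby : b * U a b y = U a b (y+1+1) - a * U a b (y+1) := by
    rw [U_add_two]; ring
  induction t with
  | zero => exact ⟨0, 0, by simp, by simp⟩
  | succ t ih =>
    obtain ⟨c, c', h1, h2⟩ := ih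
    refine ⟨c' * U a b (y+1) - a*((t:ℤ)+1)*U a b (y+1+1)^t + c*U a b (y+1+1) - a*c*U a b (y+1),
      c' * U a b (y+1+1) + b*((t:ℤ)+1)*U a b (y+1+1)^t + b*c*U a b (y+1), ?_, ?_⟩
    · have e : (y+1)*(t+1+1) = (y+1)*(t+1) + (y+1) := by ring
      rw [e, U_add a b ((y+1)*(t+1)) y, h1, h2]
      push_cast
      linear_combination (((t:ℤ)+1) * U a b (y+1+1)^t * U a b (y+1) + c * U a b (y+1)^2) * hby
    · have e : (y+1)*(t+1+1)+1 = (y+1)*(t+1) + (y+1+1) := by ring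
      rw [e, U_add a b ((y+1)*(t+1)) (y+1), h1, h2]
      push_cast
      ring

lemma master2 (k : ℕ) (hk : 1 ≤ k) (t : ℕ) :
    ∃ c c' : ℤ, U a b (k*(t+2)) = ((t:ℤ)+2) * U a b (k+1)^(t+1) * U a b k
        - ((t+2).choose 2 : ℤ) * a * U a b (k+1)^t * U a b k^2 + c * U a b k^3 ∧
      U a b (k*(t+2)+1) = U a b (k+1)^(t+2) + c' * U a b k^2 := by
  obtain ⟨y, rfl⟩ : ∃ y, k = y + 1 := ⟨k - 1, by omega⟩
  have hby : b * U a b y = U a b (y+1+1) - a * U a b (y+1) := by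
    rw [U_add_two]; ring
  induction t with
  | zero =>
    refine ⟨0, b, ?_, ?_⟩
    · have e : (y+1)*2 = (y+1) + (y+1) := by ring
      rw [e, U_add a b (y+1) y]
      simp only [Nat.choose_self]
      push_cast
      linear_combination U a b (y+1) * hby
    · have e : (y+1)*2+1 = (y+1) + (y+1+1) := by ring
      rw [e, U_add a b (y+1) (y+1)]
      ring
  | succ t ih =>
    obtain ⟨c, c', h1, h2⟩ := ih
    have hch : ((t+3).choose 2 : ℤ) = ((t:ℤ)+2) + ((t+2).choose 2 : ℤ) := by
      rw [show t+3 = (t+2)+1 from rfl, Nat.choose_succ_succ (t+2) 1, Nat.choose_one_right]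
      push_cast; ring
    refine ⟨c' + c * U a b (y+1+1) + a^2*((t+2).choose 2 : ℤ)*U a b (y+1+1)^t
        - a*c*U a b (y+1),
      c' * U a b (y+1+1) + b*((t:ℤ)+2)*U a b (y+1+1)^(t+1)
        - a*b*((t+2).choose 2 : ℤ)*U a b (y+1+1)^t*U a b (y+1) + b*c*U a b (y+1)^2, ?_, ?_⟩
    · have e : (y+1)*(t+1+2) = (y+1)*(t+2) + (y+1) := by ring
      rw [e, U_add a b ((y+1)*(t+2)) y, h1, h2, show t+1+2 = t+3 from rfl, hch]
      push_cast
      linear_combination (((t:ℤ)+2) * U a b (y+1+1)^(t+1) * U a b (y+1)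
        - ((t+2).choose 2 : ℤ) * a * U a b (y+1+1)^t * U a b (y+1)^2 + c * U a b (y+1)^3) * hby
    · have e : (y+1)*(t+1+2)+1 = (y+1)*(t+2) + (y+1+1) := by ring
      rw [e, U_add a b ((y+1)*(t+2)) (y+1), h1, h2]
      push_cast
      ring

lemma V_eq (c : ℕ) : V a b c = 2 * U a b (c+1) - a * U a b c := by
  induction c using Nat.twoStepInduction with
  | zero => show (2:ℤ) = 2*1 - a*0; ring
  | one => show a = 2*U a b 2 - a*1; rw [U_two]; ring
  | more c ih1 ih2 =>
    show a * V a b (c+1) + b * V a b c = _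
    rw [ih1, ih2, U_add_two a b (c+1), U_add_two a b c]
    ring

lemma U_double (c : ℕ) : U a b (2*c) = U a b c * V a b c := by
  rcases Nat.eq_zero_or_pos c with rfl | hc
  · simp [U_zero, V_eq]
  obtain ⟨y, rfl⟩ : ∃ y, c = y + 1 := ⟨c - 1, by omega⟩
  have e : 2*(y+1) = (y+1) + (y+1) := by ring
  rw [e, U_add a b (y+1) y, V_eq]
  have hby : b * U a b y = U a b (y+1+1) - a * U a b (y+1) := by
    rw [U_add_two]; ring
  linear_combination U a b (y+1) * hby

lemma W_eq (c : ℕ) :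
    U a b (c+1)^2 - a * U a b (c+1) * U a b c - b * U a b c^2 = (-b)^c := by
  induction c with
  | zero => rw [U_one, U_zero]; ring
  | succ c ih =>
    rw [U_add_two, pow_succ]
    linear_combination (-b) * ih

lemma V_sq (c : ℕ) : V a b c ^ 2 - (a^2+4*b) * U a b c^2 = 4*(-b)^c := by
  rw [V_eq]
  linear_combination 4 * W_eq a b c

end Hyp

/-! ### valuation api -/

def nu (q : ℕ) (x : ℤ) : ℕ := x.natAbs.factorization q

lemma nu_natCast (q m : ℕ) : nu q (m : ℤ) = m.factorization q := by
  simp [nu]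

lemma int_pow_dvd_iff_nat {q i : ℕ} {x : ℤ} : (q:ℤ)^i ∣ x ↔ q^i ∣ x.natAbs := by
  rw [← Nat.cast_pow, Int.natCast_dvd]

lemma nu_mul (q : ℕ) {x y : ℤ} (hx : x ≠ 0) (hy : y ≠ 0) :
    nu q (x*y) = nu q x + nu q y := by
  unfold nu
  rw [Int.natAbs_mul,
    Nat.factorization_mul (Int.natAbs_ne_zero.mpr hx) (Int.natAbs_ne_zero.mpr hy)]
  simp

lemma nu_pow (q : ℕ) (x : ℤ) (n : ℕ) : nu q (x^n) = n * nu q x := by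
  unfold nu
  rw [Int.natAbs_pow, Nat.factorization_pow]
  simp

lemma pow_nu_dvd (q : ℕ) (x : ℤ) : (q:ℤ)^(nu q x) ∣ x := by
  rcases eq_or_ne x 0 with rfl | hx
  · exact dvd_zero _
  · exact int_pow_dvd_iff_nat.mpr (Nat.ordProj_dvd _ _)

lemma pow_succ_nu_not_dvd {q : ℕ} (hq : q.Prime) {x : ℤ} (hx : x ≠ 0) :
    ¬ (q:ℤ)^(nu q x + 1) ∣ x := by
  rw [int_pow_dvd_iff_nat]
  exact Nat.pow_succ_factorization_not_dvd (Int.natAbs_ne_zero.mpr hx) hq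

lemma pow_dvd_iff_le_nu {q : ℕ} (hq : q.Prime) {x : ℤ} (hx : x ≠ 0) {i : ℕ} :
    (q:ℤ)^i ∣ x ↔ i ≤ nu q x := by
  rw [int_pow_dvd_iff_nat]
  exact (Nat.Prime.pow_dvd_iff_le_factorization hq (Int.natAbs_ne_zero.mpr hx))

lemma nu_eq_of {q : ℕ} (hq : q.Prime) {x : ℤ} (hx : x ≠ 0) {e : ℕ}
    (h1 : (q:ℤ)^e ∣ x) (h2 : ¬ (q:ℤ)^(e+1) ∣ x) : nu q x = e := by
  have a1 := (pow_dvd_iff_le_nu hq hx).mp h1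
  rcases Nat.lt_or_ge (nu q x) (e+1) with h | h
  · omega
  · exact absurd ((pow_dvd_iff_le_nu hq hx).mpr h) h2

lemma dvd_of_nu_ge {q : ℕ} (hq : q.Prime) {x : ℤ} {e : ℕ} (h : e ≤ nu q x) :
    (q:ℤ)^e ∣ x := by
  rcases eq_or_ne x 0 with rfl | hx
  · exact dvd_zero _
  · exact (pow_dvd_iff_le_nu hq hx).mpr h

lemma one_le_nu {q : ℕ} (hq : q.Prime) {x : ℤ} (hx : x ≠ 0) (h : (q:ℤ) ∣ x) :
    1 ≤ nu q x := by
  rw [← pow_dvd_iff_le_nu hq hx]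
  simpa using h

/-- exactness of valuation of a sum : if `nu u = e` and `q^(e+1) ∣ v` then
`u + v ≠ 0` and `nu (u+v) = e`. -/
lemma nu_add_eq {q : ℕ} (hq : q.Prime) {u v : ℤ} {e : ℕ} (hu : u ≠ 0)
    (he : nu q u = e) (hv : (q:ℤ)^(e+1) ∣ v) : u + v ≠ 0 ∧ nu q (u+v) = e := by
  have h1 : (q:ℤ)^e ∣ u + v := by
    refine dvd_add ?_ (dvd_trans (pow_dvd_pow _ (by omega)) hv)
    rw [← he]; exact pow_nu_dvd q u
  have h2 : ¬ (q:ℤ)^(e+1) ∣ u + v := by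
    intro h
    have : (q:ℤ)^(e+1) ∣ u := by
      have := dvd_sub h hv
      simpa using this
    rw [← he] at this
    exact pow_succ_nu_not_dvd hq hu this
  have hne : u + v ≠ 0 := by rintro h; rw [h] at h2; exact h2 (dvd_zero _)
  exact ⟨hne, nu_eq_of hq hne h1 h2⟩

lemma nu_eq_zero_of_not_dvd {q : ℕ} (hq : q.Prime) {x : ℤ} (h : ¬ (q:ℤ) ∣ x) :
    nu q x = 0 := by
  rcases eq_or_ne x 0 with rfl | hx
  · simp at h
  by_contra hne
  exact h (by simpa using dvd_of_nu_ge hq (show 1 ≤ nu q x by omega))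

section Hyp2
variable {a b : ℤ} (ha : 0 < a) (hD : 0 < a^2 + 4*b) (hab : IsCoprime a b)

include hab in
lemma q_not_dvd_succ {q : ℕ} (hq : q.Prime) {c : ℕ} (hqc : (q:ℤ) ∣ U a b c) :
    ¬ (q:ℤ) ∣ U a b (c+1) := by
  intro h
  have hu := (isCoprime_U_succ a b hab c).isUnit_of_dvd' hqc h
  rw [Int.isUnit_iff] at hu
  have h2 := hq.two_le
  have h0 : (0:ℤ) ≤ (q:ℤ) := Int.natCast_nonneg q
  rcases hu with h1 | h1
  · have : q = 1 := by exact_mod_cast h1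
    omega
  · omega

include ha hD hab in
lemma nu_U_mul_coprime {q : ℕ} (hq : q.Prime) {c t : ℕ} (hc : 1 ≤ c) (ht : 1 ≤ t)
    (hqc : (q:ℤ) ∣ U a b c) (hqt : ¬ q ∣ t) :
    nu q (U a b (c*t)) = nu q (U a b c) := by
  obtain ⟨s, rfl⟩ : ∃ s, t = s + 1 := ⟨t - 1, by omega⟩
  obtain ⟨c₀, c₁, h1, _⟩ := master1 a b c hc s
  have hUc : U a b c ≠ 0 := U_ne_zero a b ha hD hc
  have hX : U a b (c+1) ≠ 0 := U_ne_zero a b ha hD (by omega)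
  set e := nu q (U a b c) with he
  have he1 : 1 ≤ e := one_le_nu hq hUc hqc
  have hs0 : ((s:ℤ)+1) ≠ 0 := by positivity
  have hnuu : nu q (((s:ℤ)+1) * U a b (c+1)^s * U a b c) = e := by
    rw [nu_mul q (mul_ne_zero hs0 (pow_ne_zero _ hX)) hUc,
      nu_mul q hs0 (pow_ne_zero _ hX), nu_pow]
    have h4 : nu q ((s:ℤ)+1) = 0 := by
      rw [show ((s:ℤ)+1) = ((s+1 : ℕ) : ℤ) by push_cast; ring, nu_natCast]
      exact Nat.factorization_eq_zero_of_not_dvd hqt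
    have h5 : nu q (U a b (c+1)) = 0 :=
      nu_eq_zero_of_not_dvd hq (q_not_dvd_succ hab hq hqc)
    rw [h4, h5]
    simp [he]
  have hv : (q:ℤ)^(e+1) ∣ c₀ * U a b c^2 := by
    refine dvd_trans (pow_dvd_pow _ (show e+1 ≤ 2*e by omega)) ?_
    have : (q:ℤ)^(2*e) = ((q:ℤ)^e)^2 := by rw [← pow_mul, Nat.mul_comm]
    rw [this]
    exact (pow_dvd_pow_of_dvd (pow_nu_dvd q (U a b c)) 2).mul_left c₀
  rw [h1]
  exact (nu_add_eq hq (mul_ne_zero (mul_ne_zero hs0 (pow_ne_zero _ hX)) hUc) hnuu hv).2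


lemma nu_neg (q : ℕ) (x : ℤ) : nu q (-x) = nu q x := by simp [nu]

include ha hD hab in
lemma nu_U_mul_prime {q : ℕ} (hq : q.Prime) (hq2 : q ≠ 2) {c : ℕ} (hc : 1 ≤ c)
    (hqc : (q:ℤ) ∣ U a b c) :
    nu q (U a b (c*q)) = nu q (U a b c) + 1 := by
  have hq3 : 3 ≤ q := by
    have h2 := hq.two_le
    rcases Nat.lt_or_ge q 3 with h | h
    · interval_cases q <;> simp_all
    · exact h
  obtain ⟨s, hs⟩ : ∃ s, s + 2 = q := ⟨q - 2, by omega⟩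
  obtain ⟨c₃, c₁, h1, _⟩ := master2 a b c hc s
  have hUc : U a b c ≠ 0 := U_ne_zero a b ha hD hc
  have hX : U a b (c+1) ≠ 0 := U_ne_zero a b ha hD (by omega)
  have ha0 : a ≠ 0 := ha.ne'
  have hq0 : ((q:ℤ)) ≠ 0 := by exact_mod_cast hq.pos.ne'
  have hchne : (((q.choose 2 : ℕ)) : ℤ) ≠ 0 := by
    exact_mod_cast (Nat.choose_pos (show 2 ≤ q by omega)).ne'
  have he1 : 1 ≤ nu q (U a b c) := one_le_nu hq hUc hqc
  have h1' : U a b (c*q) = (q:ℤ) * U a b (c+1)^(s+1) * U a b c +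
      (-((q.choose 2 : ℕ) : ℤ) * a * U a b (c+1)^s * U a b c^2 + c₃ * U a b c^3) := by
    rw [← hs]
    rw [h1]
    push_cast
    ring
  have hu0 : (q:ℤ) * U a b (c+1)^(s+1) * U a b c ≠ 0 :=
    mul_ne_zero (mul_ne_zero hq0 (pow_ne_zero _ hX)) hUc
  have hnuu : nu q ((q:ℤ) * U a b (c+1)^(s+1) * U a b c) = nu q (U a b c) + 1 := by
    rw [nu_mul q (mul_ne_zero hq0 (pow_ne_zero _ hX)) hUc,
      nu_mul q hq0 (pow_ne_zero _ hX), nu_pow]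
    have h4 : nu q ((q:ℤ)) = 1 := by
      rw [nu_natCast]
      exact Nat.Prime.factorization_self hq
    have h5 : nu q (U a b (c+1)) = 0 := nu_eq_zero_of_not_dvd hq (q_not_dvd_succ hab hq hqc)
    rw [h4, h5]
    omega
  have hch : 1 ≤ nu q (((q.choose 2 : ℕ) : ℤ)) := by
    apply one_le_nu hq hchne
    exact_mod_cast Int.natCast_dvd_natCast.mpr
      (Nat.Prime.dvd_choose_self hq (by norm_num) (by omega))
  have hv : (q:ℤ)^(nu q (U a b c)+1+1) ∣
      (-((q.choose 2 : ℕ) : ℤ) * a * U a b (c+1)^s * U a b c^2 + c₃ * U a b c^3) := by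
    apply dvd_add
    · rw [show (-((q.choose 2 : ℕ) : ℤ) * a * U a b (c+1)^s * U a b c^2)
        = -(((q.choose 2 : ℕ) : ℤ) * a * U a b (c+1)^s * U a b c^2) by ring]
      rw [dvd_neg]
      apply dvd_of_nu_ge hq
      rw [nu_mul q (mul_ne_zero (mul_ne_zero hchne ha0) (pow_ne_zero _ hX)) (pow_ne_zero _ hUc),
        nu_mul q (mul_ne_zero hchne ha0) (pow_ne_zero _ hX),
        nu_mul q hchne ha0, nu_pow, nu_pow]
      omega
    · refine dvd_trans (pow_dvd_pow _ (show nu q (U a b c)+1+1 ≤ 3*nu q (U a b c) by omega)) ?_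
      rw [show ((q:ℤ))^(3*nu q (U a b c)) = (((q:ℤ))^(nu q (U a b c)))^3 by
        rw [← pow_mul, Nat.mul_comm]]
      exact (pow_dvd_pow_of_dvd (pow_nu_dvd q (U a b c)) 3).mul_left c₃
  rw [h1']
  exact (nu_add_eq hq hu0 hnuu hv).2

include ha hD hab in
lemma nu_U_mul_gen {q : ℕ} (hq : q.Prime) (hq2 : q ≠ 2) :
    ∀ w c : ℕ, 1 ≤ w → 1 ≤ c → (q:ℤ) ∣ U a b c →
    nu q (U a b (c*w)) = nu q (U a b c) + w.factorization q := by
  intro w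
  induction w using Nat.strong_induction_on with
  | _ w ih =>
  intro c hw hc hqc
  by_cases hqw : q ∣ w
  · obtain ⟨w', rfl⟩ := hqw
    have hq2' := hq.two_le
    have hw' : 1 ≤ w' := by
      rcases Nat.eq_zero_or_pos w' with rfl | h
      · omega
      · exact h
    have hqcq : (q:ℤ) ∣ U a b (c*q) := dvd_trans hqc (U_dvd_U a b ⟨q, rfl⟩)
    have h1 : nu q (U a b ((c*q)*w')) = nu q (U a b (c*q)) + w'.factorization q :=
      ih w' (by nlinarith) (c*q) hw' (by exact Nat.one_le_iff_ne_zero.mpr (Nat.mul_ne_zero (by omega) (by omega))) hqcq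
    rw [show c*(q*w') = (c*q)*w' by ring, h1,
      nu_U_mul_prime ha hD hab hq hq2 hc hqc,
      Nat.factorization_mul (by omega) (by omega)]
    have : (Nat.factorization q) q = 1 := Nat.Prime.factorization_self hq
    simp only [Finsupp.add_apply]
    omega
  · rw [nu_U_mul_coprime ha hD hab hq hc hw hqc hqw,
      Nat.factorization_eq_zero_of_not_dvd hqw]
    omega


include ha hD in
lemma V_pos_aux : ∀ k, 0 < V a b k ∧ 0 < V a b (k+1) ∧ a * V a b k ≤ 2 * V a b (k+1) := by
  intro k
  induction k with
  | zero =>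
    refine ⟨two_pos, ?_, ?_⟩
    · show 0 < a; exact ha
    · show a * 2 ≤ 2 * a; ring_nf; exact le_refl _
  | succ k ih =>
    obtain ⟨h0, h1, h2⟩ := ih
    have hrec : V a b (k+2) = a * V a b (k+1) + b * V a b k := rfl
    rcases le_or_gt 0 b with hb' | hb'
    · have hpos : 0 < V a b (k+2) := by nlinarith
      exact ⟨h1, hpos, by nlinarith⟩
    · have key : (a^2+1) * V a b (k+1) ≤ 2*a*V a b (k+2) := by nlinarith
      have hpos : 0 < V a b (k+2) := by nlinarith
      exact ⟨h1, hpos, by nlinarith⟩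

include ha hD in
lemma V_ne_zero (k : ℕ) : V a b k ≠ 0 := (V_pos_aux ha hD k).1.ne'

section TwoAdic
variable (h2a : ¬ (2:ℤ) ∣ a) (h2b : ¬ (2:ℤ) ∣ b)

lemma two_dvd_V {c : ℕ} (h : (2:ℤ) ∣ U a b c) : (2:ℤ) ∣ V a b c := by
  rw [V_eq]
  exact dvd_sub ⟨U a b (c+1), rfl⟩ (h.mul_left a)

include h2a h2b ha hD in
lemma nu_two_V_eq_one {c : ℕ} (h : 2 ≤ nu 2 (U a b c)) : nu 2 (V a b c) = 1 := by
  have hp2 : Nat.Prime 2 := Nat.prime_two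
  have hD0 : (a^2+4*b) ≠ 0 := hD.ne'
  have hb0 : b ≠ 0 := fun h => h2b (h ▸ dvd_zero 2)
  have hU0 : U a b c ≠ 0 := by
    intro h0
    rw [h0] at h
    simp [nu] at h
  have hsq : V a b c ^ 2 = (2:ℤ)^2 * (-b)^c + (a^2+4*b) * U a b c^2 := by
    linear_combination V_sq a b c
  have hnu1 : nu 2 ((2:ℤ)) = 1 := by
    rw [show ((2:ℤ)) = ((2:ℕ) : ℤ) by norm_num, nu_natCast]
    exact Nat.Prime.factorization_self hp2
  have hu0 : ((2:ℤ)^2 * (-b)^c) ≠ 0 := by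
    exact mul_ne_zero (by norm_num) (pow_ne_zero _ (neg_ne_zero.mpr hb0))
  have hnuu : nu 2 ((2:ℤ)^2 * (-b)^c) = 2 := by
    rw [nu_mul 2 (by norm_num) (pow_ne_zero _ (neg_ne_zero.mpr hb0)), nu_pow, nu_pow,
      hnu1, nu_eq_zero_of_not_dvd hp2 (by rwa [dvd_neg])]
    omega
  have hv : (2:ℤ)^(2+1) ∣ (a^2+4*b) * U a b c^2 := by
    apply dvd_of_nu_ge hp2
    rw [nu_mul 2 hD0 (pow_ne_zero _ hU0), nu_pow]
    omega
  have := (nu_add_eq hp2 hu0 hnuu hv).2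
  rw [← hsq] at this
  rw [nu_pow] at this
  omega

include h2a h2b ha hD in
lemma nu_two_V_ge_two {c : ℕ} (hc : 1 ≤ c) (h : nu 2 (U a b c) = 1) :
    2 ≤ nu 2 (V a b c) := by
  have hp2 : Nat.Prime 2 := Nat.prime_two
  have hU0 : U a b c ≠ 0 := U_ne_zero a b ha hD hc
  have hV0 : V a b c ≠ 0 := V_ne_zero ha hD c
  obtain ⟨u, hu⟩ : (2:ℤ) ∣ U a b c := by
    have := pow_nu_dvd 2 (U a b c)
    rw [h] at this
    simpa using this
  have hu_odd : ¬ (2:ℤ) ∣ u := by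
    intro ⟨w, hw⟩
    have h4 : (2:ℤ)^2 ∣ U a b c := ⟨w, by rw [hu, hw]; ring⟩
    have := (pow_dvd_iff_le_nu hp2 hU0).mp h4
    omega
  have hDodd : ¬ (2:ℤ) ∣ (a^2+4*b) := by
    intro hdd
    apply h2a
    have h2 : (2:ℤ) ∣ a^2 := by
      have := dvd_sub hdd (⟨2*b, by ring⟩ : (2:ℤ) ∣ 4*b)
      simpa using this
    exact Int.prime_two.dvd_of_dvd_pow h2
  have hOddD : Odd (a^2+4*b) := Int.not_even_iff_odd.mp
    (fun he => hDodd (even_iff_two_dvd.mp he))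
  have hOddu : Odd u := Int.not_even_iff_odd.mp
    (fun he => hu_odd (even_iff_two_dvd.mp he))
  have hOddb : Odd (-b) := Int.not_even_iff_odd.mp
    (fun he => h2b ((dvd_neg).mp (even_iff_two_dvd.mp he)))
  have h2sum : (2:ℤ) ∣ ((a^2+4*b) * u^2 + (-b)^c) := by
    rcases Nat.eq_zero_or_pos c with rfl | hc'
    · exact even_iff_two_dvd.mp ((hOddD.mul (hOddu.pow)).add_odd (by simpa using odd_one))
    · exact even_iff_two_dvd.mp ((hOddD.mul (hOddu.pow)).add_odd (hOddb.pow))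
  obtain ⟨w, hw⟩ := h2sum
  have h8 : (2:ℤ)^3 ∣ V a b c ^2 := by
    refine ⟨w, ?_⟩
    linear_combination V_sq a b c + 4 * hw + (a^2+4*b)*(U a b c + 2*u) * hu
  have := (pow_dvd_iff_le_nu hp2 (pow_ne_zero _ hV0)).mp h8
  rw [nu_pow] at this
  omega


include ha hD in
lemma nu_two_double {c : ℕ} (hc : 1 ≤ c) :
    nu 2 (U a b (c*2)) = nu 2 (U a b c) + nu 2 (V a b c) := by
  rw [show c*2 = 2*c by ring, U_double,
    nu_mul 2 (U_ne_zero a b ha hD hc) (V_ne_zero ha hD c)]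

include ha hD h2a h2b in
lemma nu_two_U2c_ge_three {c : ℕ} (hc : 1 ≤ c) (h2U : (2:ℤ) ∣ U a b c) :
    3 ≤ nu 2 (U a b (c*2)) := by
  rw [nu_two_double ha hD hc]
  have he1 : 1 ≤ nu 2 (U a b c) :=
    one_le_nu Nat.prime_two (U_ne_zero a b ha hD hc) h2U
  rcases Nat.lt_or_ge (nu 2 (U a b c)) 2 with h | h
  · have := nu_two_V_ge_two ha hD h2a h2b hc (by omega)
    omega
  · have := nu_two_V_eq_one ha hD h2a h2b (c := c) h
    omega

include ha hD h2a h2b in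
lemma nu_two_pow2 {c : ℕ} (hc : 1 ≤ c) (h2U : (2:ℤ) ∣ U a b c) :
    ∀ i : ℕ, 1 ≤ i → nu 2 (U a b (c*2^i)) = nu 2 (U a b (c*2)) + (i - 1) := by
  intro i
  induction i with
  | zero => omega
  | succ i ih =>
    intro _
    rcases Nat.eq_zero_or_pos i with rfl | hi
    · simp
    have hIH := ih hi
    have hbase := nu_two_U2c_ge_three ha hD h2a h2b hc h2U
    have hprev2 : 2 ≤ nu 2 (U a b (c*2^i)) := by omega
    have hVone : nu 2 (V a b (c*2^i)) = 1 :=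
      nu_two_V_eq_one ha hD h2a h2b hprev2
    have e : c*2^(i+1) = (c*2^i)*2 := by rw [pow_succ]; ring
    rw [e, nu_two_double ha hD (Nat.mul_pos hc (pow_pos (by norm_num) i)), hVone]
    omega

include ha hD h2a h2b hab in
lemma nu_two_formula_even {c u : ℕ} (hc : 1 ≤ c) (h2U : (2:ℤ) ∣ U a b c)
    (hu : 1 ≤ u) (h2u : 2 ∣ u) :
    nu 2 (U a b (c*u)) = nu 2 (U a b (c*2)) + (u.factorization 2 - 1) := by
  have hu0 : u ≠ 0 := by omega
  set i := u.factorization 2 with hi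
  have hi1 : 1 ≤ i := (Nat.Prime.factorization_pos_of_dvd Nat.prime_two hu0 h2u)
  have hdecomp : 2^i * (u / 2^i) = u := Nat.ordProj_mul_ordCompl_eq_self u 2
  have ht1 : 1 ≤ u / 2^i := Nat.ordCompl_pos 2 hu0
  have htodd : ¬ 2 ∣ (u / 2^i) := Nat.not_dvd_ordCompl Nat.prime_two hu0
  have h2Ui : (2:ℤ) ∣ U a b (c*2^i) :=
    dvd_trans h2U (U_dvd_U a b (Dvd.intro _ rfl))
  have e : c*u = (c*2^i) * (u / 2^i) := by rw [mul_assoc, hdecomp]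
  rw [e, nu_U_mul_coprime ha hD hab Nat.prime_two (Nat.mul_pos hc (pow_pos (by norm_num) i)) ht1 h2Ui htodd,
    nu_two_pow2 ha hD h2a h2b hc h2U i hi1]

end TwoAdic
end Hyp2

lemma nat_gcd_lcm_distrib {x y z : ℕ} (hx : x ≠ 0) (hy : y ≠ 0) (hz : z ≠ 0) :
    Nat.gcd (Nat.lcm x y) z = Nat.lcm (Nat.gcd x z) (Nat.gcd y z) := by
  have hl : Nat.lcm x y ≠ 0 := Nat.lcm_ne_zero hx hy
  have hgl : Nat.gcd (Nat.lcm x y) z ≠ 0 := by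
    rw [Ne, Nat.gcd_eq_zero_iff]
    tauto
  have hgxz : Nat.gcd x z ≠ 0 := by rw [Ne, Nat.gcd_eq_zero_iff]; tauto
  have hgyz : Nat.gcd y z ≠ 0 := by rw [Ne, Nat.gcd_eq_zero_iff]; tauto
  have hlg : Nat.lcm (Nat.gcd x z) (Nat.gcd y z) ≠ 0 := Nat.lcm_ne_zero hgxz hgyz
  apply Nat.dvd_antisymm
  · rw [← Nat.factorization_le_iff_dvd hgl hlg, Finsupp.le_def]
    intro q
    rw [Nat.factorization_gcd hl hz, Nat.factorization_lcm hx hy,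
      Nat.factorization_lcm hgxz hgyz, Nat.factorization_gcd hx hz,
      Nat.factorization_gcd hy hz, Finsupp.inf_apply, Finsupp.sup_apply,
      Finsupp.sup_apply, Finsupp.inf_apply, Finsupp.inf_apply]
    exact le_of_eq (min_max_distrib_right _ _ _)
  · exact Nat.lcm_dvd
      (Nat.dvd_gcd (dvd_trans (Nat.gcd_dvd_left x z) (Nat.dvd_lcm_left x y))
        (Nat.gcd_dvd_right x z))
      (Nat.dvd_gcd (dvd_trans (Nat.gcd_dvd_left y z) (Nat.dvd_lcm_right x y))
        (Nat.gcd_dvd_right y z))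

section Hyp3
variable {a b : ℤ} (ha : 0 < a) (hD : 0 < a^2 + 4*b) (hb : b ≠ 0) (hab : IsCoprime a b)

include ha hD hb hab in
lemma index_dvd_of_U_dvd {j k : ℕ} (hj : 3 ≤ j) (hk : 1 ≤ k)
    (h : U a b j ∣ U a b k) : j ∣ k := by
  set d := Nat.gcd j k with hd
  have hdj : d ∣ j := Nat.gcd_dvd_left j k
  have hd1 : 1 ≤ d := Nat.pos_of_ne_zero (fun h0 => by
    rw [hd, Nat.gcd_eq_zero_iff] at h0
    omega)
  have hUd : U a b j ∣ U a b d := dvd_U_gcd a b hab (U a b j) (j+k) j k le_rfl dvd_rfl h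
  rcases Nat.lt_or_ge d j with hlt | hge
  · exfalso
    have h1 : U a b d < U a b j := U_lt_of_lt a b ha hD hb hd1 hlt hj
    have h2 : U a b j ≤ U a b d := Int.le_of_dvd (U_pos a b ha hD hd1) hUd
    omega
  · have hdeq : d = j := Nat.le_antisymm (Nat.le_of_dvd (by omega) hdj) hge
    exact hdeq ▸ Nat.gcd_dvd_right j k

lemma mul_dvd_U {k c : ℕ} (hk : 1 ≤ k) (hc : 1 ≤ c) (h : ((c:ℕ):ℤ) ∣ U a b k) :
    (c:ℤ) * U a b k ∣ U a b (k*c) := by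
  obtain ⟨s, rfl⟩ : ∃ s, c = s+1 := ⟨c-1, by omega⟩
  obtain ⟨c₀, _, h1, _⟩ := master1 a b k hk s
  rw [h1]
  apply dvd_add
  · have e : ((s:ℤ)+1) * U a b (k+1)^s * U a b k
        = (U a b (k+1)^s) * ((((s+1):ℕ):ℤ) * U a b k) := by push_cast; ring
    rw [e]
    exact Dvd.dvd.mul_left dvd_rfl _
  · obtain ⟨y, hy⟩ := h
    refine ⟨c₀ * y, ?_⟩
    linear_combination (c₀ * U a b k) * hy

lemma natAbs_mul_dvd_U {k c : ℕ} (hk : 1 ≤ k) (hc : 1 ≤ c)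
    (h : c ∣ (U a b k).natAbs) :
    c * (U a b k).natAbs ∣ (U a b (k*c)).natAbs := by
  have h' : ((c:ℕ):ℤ) ∣ U a b k := Int.natCast_dvd.mpr h
  have hdvd := mul_dvd_U hk hc h'
  rw [show c * (U a b k).natAbs = ((c:ℤ) * U a b k).natAbs by
    rw [Int.natAbs_mul, Int.natAbs_natCast]]
  exact Int.natAbs_dvd_natAbs.mpr hdvd

include hab in
lemma natAbs_gcd_U (m n : ℕ) :
    Nat.gcd (U a b m).natAbs (U a b n).natAbs = (U a b (Nat.gcd m n)).natAbs := by
  apply Nat.dvd_antisymm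
  · have h1 : ((Nat.gcd (U a b m).natAbs (U a b n).natAbs : ℕ) : ℤ) ∣ U a b m :=
      Int.natCast_dvd.mpr (Nat.gcd_dvd_left _ _)
    have h2 : ((Nat.gcd (U a b m).natAbs (U a b n).natAbs : ℕ) : ℤ) ∣ U a b n :=
      Int.natCast_dvd.mpr (Nat.gcd_dvd_right _ _)
    exact Int.natCast_dvd.mp (dvd_U_gcd a b hab _ (m+n) m n le_rfl h1 h2)
  · exact Nat.dvd_gcd (Int.natAbs_dvd_natAbs.mpr (U_dvd_U a b (Nat.gcd_dvd_left m n)))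
      (Int.natAbs_dvd_natAbs.mpr (U_dvd_U a b (Nat.gcd_dvd_right m n)))

end Hyp3
end LucasAux

open LucasAux in
theorem tau_triple_case3 (a b : ℤ) (hab : IsCoprime a b) (ha : 0 < a)
    (hΔ : 0 < a ^ 2 + 4 * b) (hnd : Nondegenerate a b)
    (n p : ℕ) (hn : 0 < n) (hp : p.Prime) (hp3 : 3 ≤ p)
    (hpn : p ∣ n) (hodd : Odd n) :
    (tau a b (U a b n * U a b (n + p) * U a b (n + 2 * p)) : ℤ) =
      ((n * (n + p) * (n + 2 * p) : ℤ) / (p ^ 2 : ℕ)) * U a b p ^ 2 := by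
  classical
  obtain ⟨hb, -⟩ := hnd
  have hD : 0 < a^2 + 4*b := hΔ
  have hp2 : p ≠ 2 := by omega
  have hp1 : 1 ≤ p := by omega
  have hp0 : p ≠ 0 := by omega
  have hpodd : ¬ 2 ∣ p := by
    intro h
    have := (Nat.prime_dvd_prime_iff_eq Nat.prime_two hp).mp h
    omega
  have hn3 : 3 ≤ n := le_trans hp3 (Nat.le_of_dvd hn hpn)
  have hnodd : ¬ 2 ∣ n := by
    have := Nat.odd_iff.mp hodd
    omega
  obtain ⟨w1, hw1⟩ := hpn
  have hw1pos : 1 ≤ w1 := by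
    rcases Nat.eq_zero_or_pos w1 with rfl | h
    · omega
    · exact h
  have hw1odd : ¬ 2 ∣ w1 := fun h => hnodd (hw1 ▸ h.mul_left p)
  have hw3odd : ¬ 2 ∣ (w1 + 2) := by omega
  have hw2even : 2 ∣ (w1 + 1) := by omega
  have hnp : n + p = p * (w1 + 1) := by rw [hw1]; ring
  have hn2p : n + 2*p = p * (w1 + 2) := by rw [hw1]; ring
  -- index gcd facts
  have hsucc1 : Nat.gcd w1 (w1+1) = 1 := by
    rw [show w1 + 1 = 1 + w1 by ring, Nat.gcd_add_self_right, Nat.gcd_one_right]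
  have hsucc2 : Nat.gcd (w1+1) (w1+2) = 1 := by
    rw [show w1 + 2 = 1 + (w1+1) by ring, Nat.gcd_add_self_right, Nat.gcd_one_right]
  have hg13 : Nat.gcd w1 (w1+2) = 1 := by
    have h1 : Nat.gcd w1 (w1+2) = Nat.gcd w1 2 := by
      rw [show w1 + 2 = 2 + w1 by ring, Nat.gcd_add_self_right]
    have h2 := Nat.gcd_dvd_right w1 2
    have h3 := Nat.gcd_dvd_left w1 2
    rcases (Nat.dvd_prime Nat.prime_two).mp h2 with h | h
    · rw [h1, h]
    · exact absurd (h ▸ h3) hw1odd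
  have g1 : Nat.gcd n (n+p) = p := by
    rw [hnp, hw1, Nat.gcd_mul_left, hsucc1, Nat.mul_one]
  have g2 : Nat.gcd n (n+2*p) = p := by
    rw [hn2p, hw1, Nat.gcd_mul_left, hg13, Nat.mul_one]
  have g3 : Nat.gcd (n+p) (n+2*p) = p := by
    rw [hnp, hn2p, Nat.gcd_mul_left, hsucc2, Nat.mul_one]
  have hn0 : n ≠ 0 := by omega
  have hnp0 : n + p ≠ 0 := by omega
  have hn2p0 : n + 2*p ≠ 0 := by omega
  have glcm : Nat.gcd (Nat.lcm n (n+p)) (n+2*p) = p := by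
    rw [nat_gcd_lcm_distrib hn0 hnp0 hn2p0, g2, g3, Nat.lcm_self]
  have glcm2 : Nat.gcd n (Nat.lcm (n+p) (n+2*p)) = p := by
    rw [Nat.gcd_comm, nat_gcd_lcm_distrib hnp0 hn2p0 hn0, Nat.gcd_comm (n+p) n,
      Nat.gcd_comm (n+2*p) n, g1, g2, Nat.lcm_self]
  set L := Nat.lcm n (Nat.lcm (n+p) (n+2*p)) with hLdef
  have hL0 : L ≠ 0 := Nat.lcm_ne_zero hn0 (Nat.lcm_ne_zero hnp0 hn2p0)
  have hL1 : 1 ≤ L := by omega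
  have hnL : n ∣ L := Nat.dvd_lcm_left _ _
  have hnpL : n + p ∣ L := dvd_trans (Nat.dvd_lcm_left _ _) (Nat.dvd_lcm_right _ _)
  have hn2pL : n + 2*p ∣ L := dvd_trans (Nat.dvd_lcm_right _ _) (Nat.dvd_lcm_right _ _)
  have hpL : p ∣ L := dvd_trans ⟨w1, hw1⟩ hnL
  have hLp2 : L * p^2 = n * (n+p) * (n+2*p) := by
    have e1 : p * L = n * Nat.lcm (n+p) (n+2*p) := by
      have h := Nat.gcd_mul_lcm n (Nat.lcm (n+p) (n+2*p))
      rwa [glcm2] at h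
    have e2 : p * Nat.lcm (n+p) (n+2*p) = (n+p) * (n+2*p) := by
      have h := Nat.gcd_mul_lcm (n+p) (n+2*p)
      rwa [g3] at h
    calc L * p^2 = p * (p * L) := by ring
      _ = p * (n * Nat.lcm (n+p) (n+2*p)) := by rw [e1]
      _ = n * (p * Nat.lcm (n+p) (n+2*p)) := by ring
      _ = n * ((n+p) * (n+2*p)) := by rw [e2]
      _ = n * (n+p) * (n+2*p) := by ring
  -- values
  set u : ℕ → ℕ := fun j => (U a b j).natAbs with hu
  have hu0 : ∀ j : ℕ, 1 ≤ j → u j ≠ 0 := fun j hj =>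
    Int.natAbs_ne_zero.mpr (U_ne_zero a b ha hD hj)
  have hup0 : u p ≠ 0 := hu0 p hp1
  have hup1 : 1 ≤ u p := by omega
  set N := L * u p * u p with hNdef
  have hN0 : N ≠ 0 := by
    simp only [hNdef]
    exact Nat.mul_ne_zero (Nat.mul_ne_zero hL0 hup0) hup0
  -- u-divisibility of U-values
  have hudvd : ∀ i j : ℕ, i ∣ j → u i ∣ u j := fun i j hij =>
    Int.natAbs_dvd_natAbs.mpr (U_dvd_U a b hij)
  -- Part A : u n * u (n+p) * u (n+2*p) ∣ u N
  have hgu1 : Nat.gcd (u n) (u (n+p)) = u p := by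
    show Nat.gcd (U a b n).natAbs (U a b (n+p)).natAbs = (U a b p).natAbs
    rw [natAbs_gcd_U hab, g1]
  have hpartA : u n * u (n+p) * u (n+2*p) ∣ u N := by
    set X := Nat.lcm (u n) (u (n+p)) with hX
    have e3 : u n * u (n+p) = u p * X := by rw [← hgu1]; exact (Nat.gcd_mul_lcm _ _).symm
    have hXL : X ∣ u L := Nat.lcm_dvd (hudvd n L hnL) (hudvd (n+p) L hnpL)
    have hXlcm : X ∣ u (Nat.lcm n (n+p)) :=
      Nat.lcm_dvd (hudvd _ _ (Nat.dvd_lcm_left _ _)) (hudvd _ _ (Nat.dvd_lcm_right _ _))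
    have hgXz : Nat.gcd X (u (n+2*p)) ∣ u p := by
      have h1 : Nat.gcd X (u (n+2*p)) ∣ Nat.gcd (u (Nat.lcm n (n+p))) (u (n+2*p)) :=
        Nat.dvd_gcd (dvd_trans (Nat.gcd_dvd_left _ _) hXlcm) (Nat.gcd_dvd_right _ _)
      rwa [natAbs_gcd_U hab, glcm] at h1
    have hlcmXz : Nat.lcm X (u (n+2*p)) ∣ u L :=
      Nat.lcm_dvd hXL (hudvd (n+2*p) L hn2pL)
    have hstep0 : u n * u (n+p) * u (n+2*p) ∣ u p * (u p * u L) := by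
      rw [e3, show u p * X * u (n+2*p) = u p * (X * u (n+2*p)) by ring,
        ← Nat.gcd_mul_lcm X (u (n+2*p)),
        show u p * (u p * u L) = u p * (u p * u L) from rfl]
      exact Nat.mul_dvd_mul_left (u p) (Nat.mul_dvd_mul hgXz hlcmXz)
    have hpuL : u p ∣ u L := hudvd p L hpL
    have hstep1 : u p * u L ∣ u (L * u p) := natAbs_mul_dvd_U hL1 hup1 hpuL
    have hpuLup : u p ∣ u (L * u p) := dvd_trans hpuL (hudvd L (L * u p) ⟨u p, rfl⟩)
    have hstep2 : u p * u (L * u p) ∣ u ((L * u p) * u p) :=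
      natAbs_mul_dvd_U (Nat.one_le_iff_ne_zero.mpr (Nat.mul_ne_zero hL0 hup0)) hup1 hpuLup
    calc u n * u (n+p) * u (n+2*p) ∣ u p * (u p * u L) := hstep0
      _ ∣ u p * u (L * u p) := Nat.mul_dvd_mul_left (u p) hstep1
      _ ∣ u ((L * u p) * u p) := hstep2
      _ = u N := by rw [hNdef]
  -- Part B : minimality
  have hpartB : ∀ k : ℕ, 0 < k → (U a b n * U a b (n+p) * U a b (n+2*p)) ∣ U a b k →
      N ∣ k := by
    intro k hk hmk
    have hk0 : k ≠ 0 := by omega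
    have hUk0 : (U a b k) ≠ 0 := U_ne_zero a b ha hD (by omega)
    have hUn : U a b n ∣ U a b k :=
      dvd_trans ⟨U a b (n+p) * U a b (n+2*p), by ring⟩ hmk
    have hUnp : U a b (n+p) ∣ U a b k :=
      dvd_trans ⟨U a b n * U a b (n+2*p), by ring⟩ hmk
    have hUn2p : U a b (n+2*p) ∣ U a b k :=
      dvd_trans ⟨U a b n * U a b (n+p), by ring⟩ hmk
    have hnk : n ∣ k := index_dvd_of_U_dvd ha hD hb hab hn3 (by omega) hUn
    have hnpk : n + p ∣ k := index_dvd_of_U_dvd ha hD hb hab (by omega) (by omega) hUnp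
    have hn2pk : n + 2*p ∣ k := index_dvd_of_U_dvd ha hD hb hab (by omega) (by omega) hUn2p
    have hLk : L ∣ k := Nat.lcm_dvd hnk (Nat.lcm_dvd hnpk hn2pk)
    obtain ⟨wk, hwk⟩ : p ∣ k := dvd_trans ⟨w1, hw1⟩ hnk
    have hwk1 : 1 ≤ wk := by
      rcases Nat.eq_zero_or_pos wk with rfl | h
      · omega
      · exact h
    -- factorization comparison
    rw [← Nat.factorization_le_iff_dvd hN0 hk0, Finsupp.le_def]
    intro q
    by_cases hq : q.Prime
    swap
    · simp [Nat.factorization_eq_zero_of_not_prime _ hq]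
    have hLkfact : L.factorization q ≤ k.factorization q :=
      (Nat.factorization_le_iff_dvd hL0 hk0).mpr hLk q
    have hNfact : N.factorization q
        = L.factorization q + 2 * nu q (U a b p) := by
      rw [hNdef, Nat.factorization_mul (Nat.mul_ne_zero hL0 hup0) hup0,
        Nat.factorization_mul hL0 hup0]
      simp only [Finsupp.add_apply]
      have : (u p).factorization q = nu q (U a b p) := rfl
      omega
    by_cases hqup : q ∣ u p
    swap
    · rw [hNfact, show nu q (U a b p) = (u p).factorization q from rfl,
        Nat.factorization_eq_zero_of_not_dvd hqup]
      omega
    -- q divides u p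
    have hqU : (q:ℤ) ∣ U a b p := Int.natCast_dvd.mpr hqup
    have hUp0 : U a b p ≠ 0 := U_ne_zero a b ha hD hp1
    have he1 : 1 ≤ nu q (U a b p) := one_le_nu hq hUp0 hqU
    -- sum of valuations from divisibility
    have hsum : nu q (U a b n) + nu q (U a b (n+p)) + nu q (U a b (n+2*p))
        ≤ nu q (U a b k) := by
      have hdvd : (U a b n * U a b (n+p) * U a b (n+2*p)).natAbs ∣ (U a b k).natAbs :=
        Int.natAbs_dvd_natAbs.mpr hmk
      have hm'0 : (U a b n * U a b (n+p) * U a b (n+2*p)) ≠ 0 :=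
        mul_ne_zero (mul_ne_zero (U_ne_zero a b ha hD (by omega))
          (U_ne_zero a b ha hD (by omega))) (U_ne_zero a b ha hD (by omega))
      have h2 := (Nat.factorization_le_iff_dvd (Int.natAbs_ne_zero.mpr hm'0)
        (Int.natAbs_ne_zero.mpr hUk0)).mpr hdvd q
      have h3 : nu q (U a b n * U a b (n+p) * U a b (n+2*p))
          = nu q (U a b n) + nu q (U a b (n+p)) + nu q (U a b (n+2*p)) := by
        rw [nu_mul q (mul_ne_zero (U_ne_zero a b ha hD (by omega))
            (U_ne_zero a b ha hD (by omega))) (U_ne_zero a b ha hD (by omega)),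
          nu_mul q (U_ne_zero a b ha hD (by omega)) (U_ne_zero a b ha hD (by omega))]
      rw [← h3]
      exact h2
    -- L factorization as max
    have hLfact : L.factorization q
        = max (n.factorization q)
            (max ((n+p).factorization q) ((n+2*p).factorization q)) := by
      rw [hLdef, Nat.factorization_lcm hn0 (Nat.lcm_ne_zero hnp0 hn2p0),
        Nat.factorization_lcm hnp0 hn2p0]
      simp [Finsupp.sup_apply]
    have hkfact : k.factorization q = p.factorization q + wk.factorization q := by
      rw [hwk, Nat.factorization_mul hp0 (by omega)]
      simp
    have hnfact : n.factorization q = p.factorization q + w1.factorization q := by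
      rw [hw1, Nat.factorization_mul hp0 (by omega)]
      simp
    have hnpfact : (n+p).factorization q = p.factorization q + (w1+1).factorization q := by
      rw [hnp, Nat.factorization_mul hp0 (by omega)]
      simp
    have hn2pfact : (n+2*p).factorization q
        = p.factorization q + (w1+2).factorization q := by
      rw [hn2p, Nat.factorization_mul hp0 (by omega)]
      simp
    by_cases hq2 : q = 2
    · -- q = 2
      subst hq2
      have h2b : ¬ (2:ℤ) ∣ b := by
        intro h2b
        have hu2 := ((isCoprime_U_b a b hab (p-1)).of_isCoprime_of_dvd_left
          (show (2:ℤ) ∣ U a b (p-1+1) by rw [show p-1+1 = p by omega]; exact hqU)).isUnit_of_dvd'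
          dvd_rfl h2b
        rw [Int.isUnit_iff] at hu2
        omega
      have h2a : ¬ (2:ℤ) ∣ a := by
        intro h2a
        have h2U2 : (2:ℤ) ∣ U a b 2 := by rw [U_two]; exact h2a
        have hgcd2p : Nat.gcd 2 p = 1 := by
          have h1 := Nat.gcd_dvd_left 2 p
          have h2 := Nat.gcd_dvd_right 2 p
          rcases (Nat.dvd_prime Nat.prime_two).mp h1 with h | h
          · exact h
          · exact absurd (h ▸ h2) hpodd
        have := dvd_U_gcd a b hab (2:ℤ) (2+p) 2 p le_rfl h2U2 hqU
        rw [hgcd2p, U_one] at this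
        have := Int.le_of_dvd one_pos this
        omega
      have e := nu 2 (U a b p)
      -- valuations of the three factors
      have hv1 : nu 2 (U a b n) = nu 2 (U a b p) := by
        rw [hw1]
        exact nu_U_mul_coprime ha hD hab Nat.prime_two hp1 hw1pos hqU hw1odd
      have hv3 : nu 2 (U a b (n+2*p)) = nu 2 (U a b p) := by
        rw [hn2p]
        exact nu_U_mul_coprime ha hD hab Nat.prime_two hp1 (by omega) hqU hw3odd
      have hv2 : nu 2 (U a b (n+p)) = nu 2 (U a b (p*2)) + ((w1+1).factorization 2 - 1) := by
        rw [hnp]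
        exact nu_two_formula_even ha hD hab h2a h2b hp1 hqU (by omega) hw2even
      have hE3 : 3 ≤ nu 2 (U a b (p*2)) := nu_two_U2c_ge_three ha hD h2a h2b hp1 hqU
      have hf1 : 1 ≤ (w1+1).factorization 2 :=
        Nat.Prime.factorization_pos_of_dvd Nat.prime_two (by omega) hw2even
      -- wk must be even
      have hwk2 : 2 ∣ wk := by
        by_contra hwkodd
        have : nu 2 (U a b k) = nu 2 (U a b p) := by
          rw [hwk]
          exact nu_U_mul_coprime ha hD hab Nat.prime_two hp1 hwk1 hqU hwkodd
        omega
      have hvk : nu 2 (U a b k) = nu 2 (U a b (p*2)) + (wk.factorization 2 - 1) := by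
        rw [hwk]
        exact nu_two_formula_even ha hD hab h2a h2b hp1 hqU hwk1 hwk2
      have hfk1 : 1 ≤ wk.factorization 2 :=
        Nat.Prime.factorization_pos_of_dvd Nat.prime_two (by omega) hwk2
      -- zero 2-adic valuations of odd numbers
      have hz1 : n.factorization 2 = 0 := Nat.factorization_eq_zero_of_not_dvd hnodd
      have hz3 : (n+2*p).factorization 2 = 0 := by
        apply Nat.factorization_eq_zero_of_not_dvd
        omega
      have hzp : p.factorization 2 = 0 := Nat.factorization_eq_zero_of_not_dvd hpodd
      rw [hNfact, hkfact, hLfact, hz1, hz3, hzp, hnpfact, hzp]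
      have hmaxle : max 0 (max (0 + (w1+1).factorization 2) 0)
          ≤ (w1+1).factorization 2 := by omega
      omega
    · -- q odd
      have hv1 : nu q (U a b n) = nu q (U a b p) + w1.factorization q := by
        rw [hw1]
        exact nu_U_mul_gen ha hD hab hq hq2 w1 p hw1pos hp1 hqU
      have hv2 : nu q (U a b (n+p)) = nu q (U a b p) + (w1+1).factorization q := by
        rw [hnp]
        exact nu_U_mul_gen ha hD hab hq hq2 (w1+1) p (by omega) hp1 hqU
      have hv3 : nu q (U a b (n+2*p)) = nu q (U a b p) + (w1+2).factorization q := by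
        rw [hn2p]
        exact nu_U_mul_gen ha hD hab hq hq2 (w1+2) p (by omega) hp1 hqU
      have hvk : nu q (U a b k) = nu q (U a b p) + wk.factorization q := by
        rw [hwk]
        exact nu_U_mul_gen ha hD hab hq hq2 wk p hwk1 hp1 hqU
      rw [hNfact, hkfact, hLfact, hnfact, hnpfact, hn2pfact]
      have hmaxle : max (p.factorization q + w1.factorization q)
          (max (p.factorization q + (w1+1).factorization q)
            (p.factorization q + (w1+2).factorization q))
          ≤ p.factorization q + w1.factorization q + (w1+1).factorization q
            + (w1+2).factorization q := by omega
      omega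
  -- tau equals N
  have htau : tau a b (U a b n * U a b (n+p) * U a b (n+2*p)) = N := by
    have hNin : N ∈ {k : ℕ | 0 < k ∧ (U a b n * U a b (n+p) * U a b (n+2*p)) ∣ U a b k} := by
      constructor
      · omega
      · exact Int.natAbs_dvd_natAbs.mp (by
          rw [Int.natAbs_mul, Int.natAbs_mul]
          exact hpartA)
    apply le_antisymm (Nat.sInf_le hNin)
    apply le_csInf ⟨N, hNin⟩
    rintro k ⟨hk1, hk2⟩
    exact Nat.le_of_dvd hk1 (hpartB k hk1 hk2)
  rw [show n + 2*p = n + 2*p from rfl] at htau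
  rw [htau]
  -- final arithmetic
  have hcastN : ((N : ℕ) : ℤ) = (L : ℤ) * U a b p ^ 2 := by
    rw [hNdef]
    calc ((L * u p * u p : ℕ) : ℤ) = (L:ℤ) * (((u p : ℕ):ℤ) * ((u p : ℕ):ℤ)) := by
          push_cast; ring
      _ = (L:ℤ) * (U a b p * U a b p) := by rw [Int.natAbs_mul_self']
      _ = (L:ℤ) * U a b p^2 := by ring
  rw [hcastN]
  have hnum : ((n : ℤ) * (n + p) * (n + 2*p)) = (L : ℤ) * ((p:ℤ)^2) := by
    have h := congrArg (fun t : ℕ => (t : ℤ)) hLp2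
    push_cast at h
    linear_combination -h
  rw [show ((n : ℤ) * ((n:ℤ) + (p:ℤ)) * ((n:ℤ) + 2*(p:ℤ))) = ((n : ℤ) * (n + p) * (n + 2*p)) from rfl]
  rw [hnum]
  rw [show ((p^2 : ℕ) : ℤ) = (p:ℤ)^2 by push_cast; ring]
  rw [Int.mul_ediv_cancel _ (by positivity)]
end

section
/- For every positive integer n, |U_{n+2}| > |U_{n+1}|. -/
lemma U_neg (a b : ℤ) : ∀ n, U (-a) b n = (-1)^(n+1) * U a b n
  | 0 => by simp [U]
  | 1 => by simp [U]
  | (n+2) => by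
    simp only [U, U_neg a b (n+1), U_neg a b n]
    ring

lemma U_pos_pos (a b : ℤ) (ha : 1 ≤ a) (hb : 1 ≤ b) : ∀ k, 0 < U a b (k+1) := by
  intro k
  induction k using Nat.twoStepInduction with
  | zero => simp [U]
  | one => show (0:ℤ) < a * 1 + b * 0; linarith
  | more k ih1 ih2 =>
    show (0:ℤ) < a * U a b (k+2) + b * U a b (k+1)
    nlinarith [ih1, ih2]

lemma U_inv (a b : ℤ) (ha : 2 ≤ a) (hb : b ≤ -1) (hΔ : 1 ≤ a^2 + 4*b) :
    ∀ k, 0 < U a b (k+1) ∧ a * U a b (k+1) < 2 * U a b (k+2) := by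
  intro k
  induction k with
  | zero =>
    constructor
    · simp [U]
    · show a * U a b 1 < 2 * (a * U a b 1 + b * U a b 0)
      simp [U]; linarith
  | succ k ih =>
    obtain ⟨h1, h2⟩ := ih
    have h3 : 0 < U a b (k+2) := by nlinarith
    refine ⟨h3, ?_⟩
    show a * U a b (k+2) < 2 * (a * U a b (k+2) + b * U a b (k+1))
    nlinarith [mul_lt_mul_of_pos_left h2 (by linarith : (0:ℤ) < a)]

lemma main_pos (a b : ℤ) (ha : 1 ≤ a) (hΔ : 0 < a^2 + 4*b) (hb0 : b ≠ 0)
    (n : ℕ) (hn : 0 < n) : |U a b (n+1)| < |U a b (n+2)| := by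
  obtain ⟨m, rfl⟩ := Nat.exists_eq_add_of_lt hn
  simp only [Nat.zero_add] at *
  rcases lt_or_gt_of_ne hb0 with hb | hb
  · -- b ≤ -1
    have hb1 : b ≤ -1 := by omega
    have ha2 : 2 ≤ a := by nlinarith
    have hΔ1 : 1 ≤ a^2 + 4*b := hΔ
    obtain ⟨h1, h2⟩ := U_inv a b ha2 hb1 hΔ1 m
    obtain ⟨h3, h4⟩ := U_inv a b ha2 hb1 hΔ1 (m+1)
    have key : U a b (m+1+1) < U a b (m+1+2) := by
      show U a b (m+2) < a * U a b (m+2) + b * U a b (m+1)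
      nlinarith [sq_nonneg (a-1), mul_lt_mul_of_pos_left h2 (by linarith : (0:ℤ) < a - 1),
        mul_le_mul_of_nonneg_right (show (1:ℤ) ≤ a^2 - a + 2*b by nlinarith [sq_nonneg (a-1)]) h1.le]
    rw [abs_of_pos h3, abs_of_pos (by linarith : (0:ℤ) < U a b (m+1+2))]
    exact key
  · have hb1 : 1 ≤ b := hb
    have h1 := U_pos_pos a b ha hb1 m
    have h2 := U_pos_pos a b ha hb1 (m+1)
    have h3 := U_pos_pos a b ha hb1 (m+2)
    have key : U a b (m+1+1) < U a b (m+1+2) := by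
      show U a b (m+2) < a * U a b (m+2) + b * U a b (m+1)
      nlinarith
    rw [abs_of_pos h2, abs_of_pos h3] at *
    · exact key

theorem abs_U_strict_mono (a b : ℤ) (hab : IsCoprime a b)
    (hΔ : 0 < a ^ 2 + 4 * b) (hnd : Nondegenerate a b)
    (n : ℕ) (hn : 0 < n) :
    |U a b (n + 1)| < |U a b (n + 2)| := by
  obtain ⟨hb0, hset⟩ := hnd
  rcases lt_trichotomy a 0 with ha | ha | ha
  · have := main_pos (-a) b (by omega) (by nlinarith) hb0 n hn
    rw [U_neg, U_neg, abs_mul, abs_mul, abs_pow, abs_pow] at this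
    simpa using this
  · subst ha
    have hu : IsUnit b := (isCoprime_zero_left).mp hab
    rcases Int.isUnit_iff.mp hu with rfl | rfl
    · exact absurd (by simp : ((0:ℤ), (1:ℤ)) ∈ _) hset
    · norm_num at hΔ
  · exact main_pos a b ha (by nlinarith) hb0 n hn
end

section
/- For every positive integer n, |V_{n+1}| > |V_n|. -/
lemma V_rec (a b : ℤ) (k : ℕ) :
    V a b (k + 2) = a * V a b (k + 1) + b * V a b k := rfl

lemma V_neg (a b : ℤ) : ∀ n : ℕ, V (-a) b n = (-1 : ℤ) ^ n * V a b n := by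
  intro n
  induction n using Nat.strong_induction_on with
  | _ n ih =>
    match n with
    | 0 => simp [V]
    | 1 => simp [V]
    | (k + 2) =>
      rw [V_rec, V_rec, ih (k + 1) (by omega), ih k (by omega)]
      ring

lemma pos_case (a b : ℤ) (ha : 1 ≤ a) (hb : 1 ≤ b) :
    ∀ n : ℕ, 0 < V a b (n + 1) ∧ V a b (n + 1) < V a b (n + 2) := by
  intro n
  induction n with
  | zero =>
    show 0 < V a b 1 ∧ V a b 1 < V a b 2
    have h1 : V a b 1 = a := rfl
    have h2 : V a b 2 = a * a + b * 2 := rfl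
    refine ⟨by omega, ?_⟩
    rw [h1, h2]
    nlinarith
  | succ k ih =>
    obtain ⟨h1, h2⟩ := ih
    have h3 : 0 < V a b (k + 2) := h1.trans h2
    refine ⟨h3, ?_⟩
    have hrec : V a b (k + 3) = a * V a b (k + 2) + b * V a b (k + 1) := rfl
    show V a b (k + 2) < V a b (k + 3)
    rw [hrec]
    nlinarith

lemma neg_case (a b : ℤ) (ha : 3 ≤ a) (hΔ : 0 < a ^ 2 + 4 * b) :
    ∀ n : ℕ, 0 < V a b (n + 1) ∧ a * V a b (n + 1) < 2 * V a b (n + 2) := by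
  intro n
  induction n with
  | zero =>
    show 0 < V a b 1 ∧ a * V a b 1 < 2 * V a b 2
    have h1 : V a b 1 = a := rfl
    have h2 : V a b 2 = a * a + b * 2 := rfl
    refine ⟨by omega, ?_⟩
    rw [h1, h2]
    nlinarith
  | succ k ih =>
    obtain ⟨h1, h2⟩ := ih
    have h3 : 0 < V a b (k + 2) := by nlinarith
    refine ⟨h3, ?_⟩
    have hrec : V a b (k + 3) = a * V a b (k + 2) + b * V a b (k + 1) := rfl
    show a * V a b (k + 2) < 2 * V a b (k + 3)
    rw [hrec]
    nlinarith [mul_lt_mul_of_pos_left h2 (show (0:ℤ) < a by omega),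
      mul_pos (show (0:ℤ) < a ^ 2 + 4 * b from hΔ) h1]

lemma key_pos_a (a b : ℤ) (ha : 1 ≤ a) (hb : b ≠ 0) (hΔ : 0 < a ^ 2 + 4 * b)
    (m : ℕ) : |V a b (m + 1)| < |V a b (m + 2)| := by
  rcases lt_or_ge b 0 with hbneg | hbpos
  · have hb1 : b ≤ -1 := by omega
    have ha3 : 3 ≤ a := by nlinarith
    obtain ⟨h1, h2⟩ := neg_case a b ha3 hΔ m
    have h3 : 0 < V a b (m + 2) := by nlinarith
    rw [abs_of_pos h1, abs_of_pos h3]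
    nlinarith
  · have hb1 : 1 ≤ b := by omega
    obtain ⟨h1, h2⟩ := pos_case a b ha hb1 m
    rw [abs_of_pos h1, abs_of_pos (h1.trans h2)]
    exact h2

theorem abs_V_strict_mono (a b : ℤ) (hab : IsCoprime a b)
    (hΔ : 0 < a ^ 2 + 4 * b) (hnd : Nondegenerate a b)
    (n : ℕ) (hn : 0 < n) :
    |V a b n| < |V a b (n + 1)| := by
  obtain ⟨m, rfl⟩ : ∃ m, n = m + 1 := ⟨n - 1, by omega⟩
  have hb0 : b ≠ 0 := hnd.1
  rcases lt_trichotomy a 0 with haneg | rfl | hapos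
  · have e : ∀ k, |V a b k| = |V (-a) b k| := by
      intro k
      have h2 := V_neg (-a) b k
      rw [neg_neg] at h2
      rw [h2, abs_mul]
      simp
    rw [e (m + 1), e (m + 2)]
    exact key_pos_a (-a) b (by omega) hb0 (by nlinarith) m
  · have hu : IsUnit b := isCoprime_zero_left.mp hab
    rcases Int.isUnit_iff.mp hu with rfl | rfl
    · exact absurd (by norm_num [Nondegenerate]) hnd.2
    · exact absurd (by norm_num [Nondegenerate]) hnd.2
  · exact key_pos_a a b (by omega) hb0 hΔ m
end
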